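/- arXiv:1808.04421 — 2 statements merged into one kernel-verified Lean document; each statement's English description precedes it below -/
import Mathlib

section
/- Let X be a set with tribracket and R a commutative ring with identity, with units x_{a,b,c}, y_{a,b,c} for each triple. Suppose that for all a,b,c,d ∈ X and all u,v,w,z ∈ R, the three sticker values assigned to the distinguished region in the Reidemeister III move agree, i.e., the three R-linear expressions in independent variables u,v,w,z obtained from composing crossing relations on the two sides of the move are equal as functions of (u,v,w,z). Then the coefficients (x,y) satisfy the tribracket module axioms of Definition 3.2. Conversely, the module axioms imply the three expressions agree. -/
/-- The tribracket module axioms of Definition 3.2. -/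
def IsTribracketModule {X R : Type*} [CommRing R] (tb : X → X → X → X)
    (x y : X → X → X → R) : Prop :=
  (∀ a b c : X, IsUnit (x a b c) ∧ IsUnit (y a b c)) ∧
  ∀ a b c d : X,
    (x c (tb a b c) (tb a c d) * x a b c = x d (tb a b d) (tb a c d) * x a b d ∧
     x d (tb a b d) (tb a c d) * x a b d =
       x b (tb a b c) (tb a b d) * x a b c + y b (tb a b c) (tb a b d) * x a b d
         - x b (tb a b c) (tb a b d) * y b (tb a b c) (tb a b d)) ∧
    (y c (tb a b c) (tb a c d) * y a c d = y b (tb a b c) (tb a b d) * y a b d ∧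
     y b (tb a b c) (tb a b d) * y a b d =
       x d (tb a b d) (tb a c d) * y a b d + y d (tb a b d) (tb a c d) * y a c d
         - x d (tb a b d) (tb a c d) * y d (tb a b d) (tb a c d)) ∧
    (x b (tb a b c) (tb a b d) * y a b c = y d (tb a b d) (tb a c d) * x a c d ∧
     y d (tb a b d) (tb a c d) * x a c d =
       x c (tb a b c) (tb a c d) * y a b c + y c (tb a b c) (tb a c d) * x a c d
         - x c (tb a b c) (tb a c d) * y c (tb a b c) (tb a c d)) ∧
    (x c (tb a b c) (tb a c d) * x a b c * y a b c
        + y c (tb a b c) (tb a c d) * x a c d * y a c d =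
       x b (tb a b c) (tb a b d) * x a b c * y a b c
        + y b (tb a b c) (tb a b d) * x a b d * y a b d ∧
     x b (tb a b c) (tb a b d) * x a b c * y a b c
        + y b (tb a b c) (tb a b d) * x a b d * y a b d =
       x d (tb a b d) (tb a c d) * x a b d * y a b d
        + y d (tb a b d) (tb a c d) * x a c d * y a c d)

/-- The sticker value of the output region of the crossing with input colors
`(p,q,r)` and stickers `v', u', w'`: `z' = -x_{p,q,r} y_{p,q,r} v' + x_{p,q,r} u' + y_{p,q,r} w'`. -/
def stickerOut {X R : Type*} [CommRing R] (x y : X → X → X → R)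
    (p q r : X) (v' u' w' : R) : R :=
  -(x p q r * y p q r * v') + x p q r * u' + y p q r * w'

/-- In the Reidemeister III move with top colors `a,b,c,d` and outer stickers
`u,v,w,z`, the sticker of the region marked `∗` computed in the three possible ways
agrees for all `u,v,w,z` if and only if the coefficients `(x,y)` satisfy the
tribracket module axioms of Definition 3.2 (given that all coefficients are units). -/
theorem reidemeisterIII_sticker_iff_module {X R : Type*} [CommRing R]
    (tb : X → X → X → X) (x y : X → X → X → R)
    (hunit : ∀ a b c : X, IsUnit (x a b c) ∧ IsUnit (y a b c)) :
    (∀ a b c d : X, ∀ u v w z : R,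
      stickerOut x y b (tb a b c) (tb a b d)
          u (stickerOut x y a b c v u w) (stickerOut x y a b d v u z) =
        stickerOut x y c (tb a b c) (tb a c d)
          w (stickerOut x y a b c v u w) (stickerOut x y a c d v w z) ∧
      stickerOut x y c (tb a b c) (tb a c d)
          w (stickerOut x y a b c v u w) (stickerOut x y a c d v w z) =
        stickerOut x y d (tb a b d) (tb a c d)
          z (stickerOut x y a b d v u z) (stickerOut x y a c d v w z)) ↔
    IsTribracketModule tb x y := by
  constructor
  · intro h
    refine ⟨hunit, fun a b c d => ?_⟩
    have h1000 := h a b c d 1 0 0 0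
    have h0100 := h a b c d 0 1 0 0
    have h0010 := h a b c d 0 0 1 0
    have h0001 := h a b c d 0 0 0 1
    simp only [stickerOut] at h1000 h0100 h0010 h0001
    refine ⟨⟨?_, ?_⟩, ⟨?_, ?_⟩, ⟨?_, ?_⟩, ⟨?_, ?_⟩⟩
    · linear_combination h1000.2
    · linear_combination (-1 : R) * h1000.1 - h1000.2
    · linear_combination (-1 : R) * h0001.1
    · linear_combination h0001.1 + h0001.2
    · linear_combination h0010.1 + h0010.2
    · linear_combination (-1 : R) * h0010.2
    · linear_combination h0100.1
    · linear_combination (-1 : R) * h0100.1 - h0100.2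
  · rintro ⟨-, hm⟩ a b c d u v w z
    obtain ⟨⟨h11, h12⟩, ⟨h21, h22⟩, ⟨h31, h32⟩, ⟨h41, h42⟩⟩ := hm a b c d
    simp only [stickerOut]
    constructor
    · linear_combination (-u) * h11 - u * h12 + v * h41 + w * h31 + w * h32 - z * h21
    · linear_combination u * h11 - v * h41 - v * h42 - w * h32 + z * h21 + z * h22
end

section
/- Let X = {1,2} with tribracket [[[1,2],[2,1]],[[2,1],[1,2]]] and let V be the Z/3-module structure with x-tensor [[[2,2],[2,1]],[[1,2],[2,2]]] and y-tensor [[[1,2],[2,2]],[[2,2],[2,1]]]. Then V satisfies the tribracket module axioms. -/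
/-- The two-element tribracket `[[[1,2],[2,1]],[[2,1],[1,2]]]` (identified with
`Fin 2` via `1 ↦ 0`, `2 ↦ 1`, so `[a,b,c] = a+b+c mod 2`), with the `ℤ/3`-module
structure given by the x-tensor `[[[2,2],[2,1]],[[1,2],[2,2]]]` and y-tensor
`[[[1,2],[2,2]],[[2,2],[2,1]]]`, satisfies the tribracket module axioms. -/
theorem example_module_zmod3 :
    IsTribracketModule (fun a b c : Fin 2 => a + b + c)
      (fun a b c => (![![![2, 2], ![2, 1]], ![![1, 2], ![2, 2]]] : Fin 2 → Fin 2 → Fin 2 → ZMod 3) a b c)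
      (fun a b c => (![![![1, 2], ![2, 2]], ![![2, 2], ![2, 1]]] : Fin 2 → Fin 2 → Fin 2 → ZMod 3) a b c) := by
  constructor
  · intro a b c
    constructor <;> rw [isUnit_iff_ne_zero] <;> fin_cases a <;> fin_cases b <;> fin_cases c <;> decide
  · decide
end
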